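/- arXiv:1911.00786 — 5 statements merged into one kernel-verified Lean document; each statement's English description precedes it below -/
import Mathlib

section
/- Strong soundness: If X ⊢ φ and w is a state of a game such that w ⊩ χ for each formula χ ∈ X, then w ⊩ φ. -/
/-- Formulas of the language Φ, over a set `A` of agents, with propositional
variables indexed by `ℕ`.  `dil C X s` is the ethical-dilemma modality `[C:X]_s`,
where the finite set `X` of formulae is represented by a list. -/
inductive Fm (A : Type) : Type
  | var : ℕ → Fm A
  | neg : Fm A → Fm A
  | imp : Fm A → Fm A → Fm A
  | dil : Set A → List (Fm A) → (A → ℝ) → Fm A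

namespace Fm

variable {A : Type}

/-- Truth ⊤. -/
def top : Fm A := imp (var 0) (var 0)

/-- Falsehood ⊥. -/
def bot : Fm A := neg top

/-- Conjunction, defined as usual. -/
def conj (φ ψ : Fm A) : Fm A := neg (imp φ (neg ψ))

/-- Disjunction, defined as usual. -/
def disj (φ ψ : Fm A) : Fm A := imp (neg φ) ψ

/-- Disjunction of all formulae in a list (`∨∅ = ⊥`). -/
def bigOr : List (Fm A) → Fm A
  | [] => bot
  | φ :: rest => disj φ (bigOr rest)

/-- Conjunction of all formulae in a list (`∧∅ = ⊤`). -/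
def bigAnd : List (Fm A) → Fm A
  | [] => top
  | φ :: rest => conj φ (bigAnd rest)

/-- `X ⊗ Y = {φ ∧ ψ | φ ∈ X, ψ ∈ Y}`. -/
def otimes (X Y : List (Fm A)) : List (Fm A) :=
  X.flatMap fun φ => Y.map fun ψ => conj φ ψ

/-- `X₁ ⊗ X₂ ⊗ ⋯ ⊗ Xₙ`, which is `{⊤}` for `n = 0` and `X₁` for `n = 1`. -/
def bigOtimes : List (List (Fm A)) → List (Fm A)
  | [] => [top]
  | X :: rest => rest.foldl otimes X

/-- The weak dilemma `⟪C:X⟫_s`, i.e. the disjunction `⋁_{∅ ≠ Z ⊆ X} [C:Z]_s`. -/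
def wdil (C : Set A) (X : List (Fm A)) (s : A → ℝ) : Fm A :=
  bigOr (((X.sublists).filter fun Z => !Z.isEmpty).map fun Z => dil C Z s)

/-- A propositional tautology in the language Φ: a formula that evaluates to true
under every Boolean valuation that respects negation and implication (treating
variables and dilemma formulae as atoms). -/
def Tautology (φ : Fm A) : Prop :=
  ∀ v : Fm A → Bool,
    (∀ ψ, v (neg ψ) = !v ψ) →
    (∀ ψ χ, v (imp ψ χ) = (!v ψ || v χ)) →
    v φ = true

/-- Derivability `⊢ φ` in the logical system: all propositional tautologies,
the Combination, Monotonicity, Minimality and No Alternatives axioms, and the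
Modus Ponens, Necessitation and Substitution inference rules. -/
inductive Derives : Fm A → Prop
  | taut {φ : Fm A} : Tautology φ → Derives φ
  | comb {C : Set A} {X Y : List (Fm A)} {s : A → ℝ} :
      C.Nonempty → X ≠ [] → Y ≠ [] →
      Derives (imp (dil C X s) (imp (dil C Y s) (wdil C (otimes X Y) s)))
  | mono {C D : Set A} {X : List (Fm A)} {s s' : A → ℝ} :
      C.Nonempty → C ⊆ D → X ≠ [] → (∀ a, s a ≤ s' a) →
      Derives (imp (dil C X s') (wdil D X s))
  | minim {C : Set A} {X Y : List (Fm A)} {s : A → ℝ} :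
      C.Nonempty → Y ≠ [] → {ψ | ψ ∈ Y} ⊂ {ψ | ψ ∈ X} →
      Derives (imp (dil C X s) (neg (dil C Y s)))
  | noalt {C D : Set A} {X : List (Fm A)} {s : A → ℝ} :
      C.Nonempty → D.Nonempty → (∃ φ, {ψ | ψ ∈ X} = {φ}) →
      Derives (imp (dil C X s) (dil D X s))
  | mp {φ ψ : Fm A} : Derives φ → Derives (imp φ ψ) → Derives ψ
  | nec {φ : Fm A} {C : Set A} {s : A → ℝ} :
      C.Nonempty → Derives φ → Derives (dil C [φ] s)
  | subst {C : Set A} {X : List (Fm A)} {s : A → ℝ} {τ : Fm A → Fm A} :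
      C.Nonempty → X ≠ [] → (∀ φ ∈ X, Derives (imp φ (τ φ))) →
      Derives (imp (dil C X s) (wdil C (X.map τ) s))

/-- `Γ ⊢ φ`: provable from the theorems of the system and the additional set of
formulae `Γ` using the Modus Ponens inference rule only. -/
inductive DerivesFrom (Γ : Set (Fm A)) : Fm A → Prop
  | thm {φ : Fm A} : Derives φ → DerivesFrom Γ φ
  | hyp {φ : Fm A} : φ ∈ Γ → DerivesFrom Γ φ
  | mp {φ ψ : Fm A} : DerivesFrom Γ φ → DerivesFrom Γ (imp φ ψ) → DerivesFrom Γ ψ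

end Fm

/-- A game `(W, Δ, |·|, M, π)`. -/
structure Game (A : Type) where
  /-- the set of states -/
  W : Type
  /-- the nonempty set Δ of actions -/
  St : Type
  st_nonempty : Nonempty St
  /-- `cost d a w` is the cost `|d|ᵃ_w` of action `d` for agent `a` in state `w` -/
  cost : St → A → W → ℝ
  /-- the mechanism `M ⊆ W × Δ^𝒜 × W` -/
  M : W → (A → St) → W → Prop
  /-- valuation of propositional variables -/
  pi : ℕ → Set W

namespace Game

variable {A : Type}

/-- Satisfaction `w ⊩ φ` (as `Sat G φ w`). -/
def Sat (G : Game A) : Fm A → G.W → Prop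
  | .var p, w => w ∈ G.pi p
  | .neg φ, w => ¬ Sat G φ w
  | .imp φ ψ, w => ¬ Sat G φ w ∨ Sat G ψ w
  | .dil C X s, w =>
      (∀ t : ↥C → G.St, ∃ φ, ∃ _ : φ ∈ X,
          ∀ (δ : A → G.St) (u : G.W),
            (∀ a : A, G.cost (δ a) a w ≤ s a) → (∀ a : ↥C, t a = δ a.1) →
            G.M w δ u → Sat G φ u) ∧
      (∀ Y : Set (Fm A), Y.Nonempty → Y ⊂ {ψ | ψ ∈ X} →
          ∃ t : ↥C → G.St, ∀ φ, ∀ _ : φ ∈ Y,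
            ∃ (δ : A → G.St) (u : G.W),
              (∀ a : A, G.cost (δ a) a w ≤ s a) ∧ (∀ a : ↥C, t a = δ a.1) ∧
              G.M w δ u ∧ ¬ Sat G φ u)
termination_by φ _ => sizeOf φ
decreasing_by
  all_goals
    first
      | (simp <;> omega)
      | (have h1 : sizeOf φ < sizeOf X := List.sizeOf_lt_of_mem ‹φ ∈ X›
         simp <;> omega)
      | (have hX : φ ∈ X := by
           have := (‹Y ⊂ {ψ | ψ ∈ X}›.1) ‹φ ∈ Y›
           simpa using this
         have h1 : sizeOf φ < sizeOf X := List.sizeOf_lt_of_mem hX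
         simp <;> omega)

end Game

namespace Fm

variable {A : Type}

/-- A set of formulae is consistent if ⊥ is not provable from it. -/
def Consistent (Γ : Set (Fm A)) : Prop := ¬ DerivesFrom Γ bot

/-- A maximal consistent set of formulae. -/
def MCS (Γ : Set (Fm A)) : Prop :=
  Consistent Γ ∧ ∀ φ : Fm A, φ ∉ Γ → ¬ Consistent (insert φ Γ)

end Fm

/-- The canonical game: states are maximal consistent sets, actions are pairs
`(Ψ, c)` of a set of "demanded" formulae and an offered price `c`. -/
def canonicalGame (A : Type) : Game A where
  W := {Γ : Set (Fm A) // Fm.MCS Γ}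
  St := Set (Fm A) × ℝ
  st_nonempty := ⟨(∅, 0)⟩
  cost := fun d _ _ => d.2
  M := fun w δ u =>
    (∀ a : A, (δ a).1 ⊆ u.1) ∧
    ∀ (C : Set A) (X : List (Fm A)) (s : A → ℝ),
      C.Nonempty → X ≠ [] → Fm.wdil C X s ∈ w.1 → (∀ a : A, (δ a).2 ≤ s a) →
      ∃ a ∈ C, ∃ φ ∈ (δ a).1, φ ∈ X
  pi := fun p => {w | Fm.var p ∈ w.1}

/-!
Soundness of the axioms rests on one observation: `w ⊩ [C:X]_s` says exactly that `X` is a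
minimal *unavoidable* set, where `Y` is unavoidable if against every strategy of `C` some
`φ ∈ Y` holds in all outcomes within the budget `s`. Every axiom whose conclusion is a weak
dilemma `⟪C:X⟫_s` then only needs `X` to be unavoidable, because a finite unavoidable set
contains a minimal unavoidable subset, and a subset of `X` is the set of members of a sublist
of `X`.
-/

theorem Set.Finite.exists_minimal_subset {α : Type*} {P : Set α → Prop} {s : Set α}
    (hs : s.Finite) (hP : P s) : ∃ t ⊆ s, Minimal P t := by
  obtain ⟨t, hts, ⟨hts', htP⟩, hmin⟩ :=
    Set.Finite.exists_le_minimal (hs.finite_subsets.inter_of_left {t | P t}) ⟨Set.Subset.rfl, hP⟩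
  refine ⟨t, hts', Set.minimal_iff_forall_ssubset.mpr ⟨htP, fun u hut huP => ?_⟩⟩
  exact hut.not_subset (hmin ⟨hut.subset.trans hts', huP⟩ hut.subset)

namespace Fm

variable {A : Type}

theorem conj_mem_otimes {φ ψ : Fm A} {X Y : List (Fm A)} (hφ : φ ∈ X) (hψ : ψ ∈ Y) :
    conj φ ψ ∈ otimes X Y :=
  List.mem_flatMap.mpr ⟨φ, hφ, List.mem_map_of_mem hψ⟩

end Fm

namespace Game

variable {A : Type} (G : Game A)

def Forces (C : Set A) (s : A → ℝ) (w : G.W) (t : C → G.St) (φ : Fm A) : Prop :=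
  ∀ (δ : A → G.St) (u : G.W), (∀ a, G.cost (δ a) a w ≤ s a) → (∀ a : C, t a = δ a) →
    G.M w δ u → G.Sat φ u

def Unavoidable (C : Set A) (s : A → ℝ) (w : G.W) (Y : Set (Fm A)) : Prop :=
  ∀ t : C → G.St, ∃ φ ∈ Y, G.Forces C s w t φ

variable {G} {C D : Set A} {s s' : A → ℝ} {w : G.W} {φ ψ : Fm A} {X Y : List (Fm A)}

theorem not_unavoidable_empty : ¬ G.Unavoidable C s w ∅ := fun h =>
  let ⟨_, hφ, _⟩ := h fun _ => G.st_nonempty.some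
  hφ

theorem sat_neg_iff : G.Sat (.neg φ) w ↔ ¬ G.Sat φ w := by
  rw [Sat]

theorem sat_imp_iff : G.Sat (.imp φ ψ) w ↔ (G.Sat φ w → G.Sat ψ w) := by
  rw [Sat, imp_iff_not_or]

theorem sat_dil_iff :
    G.Sat (.dil C X s) w ↔ Minimal (G.Unavoidable C s w) {ψ | ψ ∈ X} := by
  rw [Sat, Set.minimal_iff_forall_ssubset]
  refine and_congr (by simp only [Unavoidable, Forces, exists_prop, Set.mem_ofPred_eq]) ⟨?_, ?_⟩
  · intro h Y hYX hY
    rcases Y.eq_empty_or_nonempty with rfl | hYne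
    · exact not_unavoidable_empty hY
    obtain ⟨t, ht⟩ := h Y hYne hYX
    obtain ⟨φ, hφY, hφ⟩ := hY t
    obtain ⟨δ, u, hcost, hδ, hM, hu⟩ := ht φ hφY
    exact hu (hφ δ u hcost hδ hM)
  · intro h Y _ hYX
    simpa [Unavoidable, Forces] using h hYX

theorem sat_top : G.Sat .top w :=
  sat_imp_iff.mpr id

theorem not_sat_bot : ¬ G.Sat .bot w :=
  fun h => sat_neg_iff.mp h sat_top

theorem sat_conj_iff : G.Sat (.conj φ ψ) w ↔ G.Sat φ w ∧ G.Sat ψ w := by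
  rw [Fm.conj, sat_neg_iff, sat_imp_iff, sat_neg_iff]
  tauto

theorem sat_disj_iff : G.Sat (.disj φ ψ) w ↔ G.Sat φ w ∨ G.Sat ψ w := by
  rw [Fm.disj, sat_imp_iff, sat_neg_iff]
  tauto

theorem sat_bigOr_iff : G.Sat (.bigOr X) w ↔ ∃ φ ∈ X, G.Sat φ w := by
  induction X with
  | nil => simp [Fm.bigOr, not_sat_bot]
  | cons φ X ih => simp [Fm.bigOr, sat_disj_iff, ih]

theorem sat_wdil_iff :
    G.Sat (.wdil C X s) w ↔ ∃ Z : List (Fm A), Z.Sublist X ∧ Z ≠ [] ∧ G.Sat (.dil C Z s) w := by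
  simp [Fm.wdil, sat_bigOr_iff, and_assoc]

theorem sat_wdil_of_unavoidable (h : G.Unavoidable C s w {ψ | ψ ∈ X}) :
    G.Sat (.wdil C X s) w := by
  classical
  obtain ⟨Y, hYX, hY⟩ := X.finite_toSet.exists_minimal_subset h
  have hmem : {ψ | ψ ∈ X.filter (· ∈ Y)} = Y := by
    ext ψ
    simpa using fun hψ => hYX hψ
  refine sat_wdil_iff.mpr ⟨X.filter (· ∈ Y), List.filter_sublist, fun hnil => ?_, ?_⟩
  · simp only [hnil, List.not_mem_nil, Set.ofPred_false] at hmem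
    exact not_unavoidable_empty (hmem ▸ hY.prop)
  · rwa [sat_dil_iff, hmem]

theorem unavoidable_singleton_iff :
    G.Unavoidable C s w {φ} ↔
      ∀ (δ : A → G.St) (u : G.W), (∀ a, G.cost (δ a) a w ≤ s a) → G.M w δ u → G.Sat φ u := by
  simp only [Unavoidable, Forces, Set.mem_singleton_iff, exists_eq_left]
  exact ⟨fun h δ u hcost hM => h (fun a => δ a) δ u hcost (fun _ => rfl) hM,
    fun h _ δ u hcost _ hM => h δ u hcost hM⟩

theorem sat_dil_of_members_eq_singleton (hX : {ψ | ψ ∈ X} = {φ}) :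
    G.Sat (.dil C X s) w ↔
      ∀ (δ : A → G.St) (u : G.W), (∀ a, G.cost (δ a) a w ≤ s a) → G.M w δ u → G.Sat φ u := by
  rw [sat_dil_iff, hX, Set.minimal_iff_forall_ssubset, unavoidable_singleton_iff]
  refine and_iff_left_of_imp fun _ Y hY => ?_
  rw [Set.ssubset_singleton_iff.mp hY]
  exact not_unavoidable_empty

theorem Unavoidable.mono {S T : Set (Fm A)} (h : G.Unavoidable C s' w S) (hCD : C ⊆ D)
    (hs : ∀ a, s a ≤ s' a) (hST : ∀ φ ∈ S, ∃ ψ ∈ T, ∀ u, G.Sat φ u → G.Sat ψ u) :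
    G.Unavoidable D s w T := fun t => by
  obtain ⟨φ, hφS, hφ⟩ := h fun a => t ⟨a, hCD a.2⟩
  obtain ⟨ψ, hψT, hφψ⟩ := hST φ hφS
  exact ⟨ψ, hψT, fun δ u hcost hδ hM =>
    hφψ u (hφ δ u (fun a => (hcost a).trans (hs a)) (fun a => hδ ⟨a, hCD a.2⟩) hM)⟩

theorem Unavoidable.otimes (hX : G.Unavoidable C s w {ψ | ψ ∈ X})
    (hY : G.Unavoidable C s w {ψ | ψ ∈ Y}) :
    G.Unavoidable C s w {ψ | ψ ∈ Fm.otimes X Y} := fun t => by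
  obtain ⟨φ, hφX, hφ⟩ := hX t
  obtain ⟨ψ, hψY, hψ⟩ := hY t
  exact ⟨.conj φ ψ, Fm.conj_mem_otimes hφX hψY, fun δ u hcost hδ hM =>
    sat_conj_iff.mpr ⟨hφ δ u hcost hδ hM, hψ δ u hcost hδ hM⟩⟩

theorem sat_of_tautology (h : Fm.Tautology φ) : G.Sat φ w := by
  classical
  simpa using h (fun ψ => decide (G.Sat ψ w)) (fun ψ => by simp [sat_neg_iff])
    (fun ψ χ => by simp [sat_imp_iff, imp_iff_not_or])

theorem sat_comb :
    G.Sat (.imp (.dil C X s) (.imp (.dil C Y s) (.wdil C (Fm.otimes X Y) s))) w := by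
  simp only [sat_imp_iff, sat_dil_iff]
  exact fun hX hY => sat_wdil_of_unavoidable (hX.prop.otimes hY.prop)

theorem sat_mono (hCD : C ⊆ D) (hs : ∀ a, s a ≤ s' a) :
    G.Sat (.imp (.dil C X s') (.wdil D X s)) w := by
  rw [sat_imp_iff, sat_dil_iff]
  exact fun hX => sat_wdil_of_unavoidable (hX.prop.mono hCD hs fun φ hφ => ⟨φ, hφ, fun _ => id⟩)

theorem sat_minim (hYX : {ψ | ψ ∈ Y} ⊂ {ψ | ψ ∈ X}) :
    G.Sat (.imp (.dil C X s) (.neg (.dil C Y s))) w := by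
  simp only [sat_imp_iff, sat_neg_iff, sat_dil_iff]
  exact fun hX hY => hX.not_prop_of_ssubset hYX hY.prop

theorem sat_noalt (hX : ∃ φ, {ψ | ψ ∈ X} = {φ}) :
    G.Sat (.imp (.dil C X s) (.dil D X s)) w := by
  obtain ⟨φ, hφ⟩ := hX
  rw [sat_imp_iff, sat_dil_of_members_eq_singleton hφ, sat_dil_of_members_eq_singleton hφ]
  exact id

theorem sat_nec (h : ∀ u, G.Sat φ u) : G.Sat (.dil C [φ] s) w :=
  (sat_dil_of_members_eq_singleton (by simp)).mpr fun _ u _ _ => h u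

theorem sat_subst {τ : Fm A → Fm A} (hτ : ∀ φ ∈ X, ∀ u, G.Sat (.imp φ (τ φ)) u) :
    G.Sat (.imp (.dil C X s) (.wdil C (X.map τ) s)) w := by
  rw [sat_imp_iff, sat_dil_iff]
  exact fun hX => sat_wdil_of_unavoidable <| hX.prop.mono subset_rfl (fun _ => le_rfl)
    fun φ hφ => ⟨τ φ, List.mem_map_of_mem hφ, fun u => sat_imp_iff.mp (hτ φ hφ u)⟩

theorem sat_of_derives (h : Fm.Derives φ) (w : G.W) : G.Sat φ w := by
  induction h generalizing w with
  | taut h => exact sat_of_tautology h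
  | comb => exact sat_comb
  | mono _ hCD _ hs => exact sat_mono hCD hs
  | minim _ _ hYX => exact sat_minim hYX
  | noalt _ _ hX => exact sat_noalt hX
  | mp _ _ ihφ ihimp => exact sat_imp_iff.mp (ihimp w) (ihφ w)
  | nec _ _ ih => exact sat_nec ih
  | subst _ _ _ ih => exact sat_subst ih

end Game

theorem strong_soundness_general {A : Type} {Γ : Set (Fm A)} {φ : Fm A}
    (h : Fm.DerivesFrom Γ φ) (G : Game A) (w : G.W)
    (hΓ : ∀ χ ∈ Γ, G.Sat χ w) : G.Sat φ w := by
  induction h with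
  | thm hφ => exact Game.sat_of_derives hφ w
  | hyp hφ => exact hΓ _ hφ
  | mp _ _ ihφ ihimp => exact Game.sat_imp_iff.mp ihimp ihφ

/-- Strong soundness: if `X ⊢ φ` and `w` is a state of a game such that `w ⊩ χ`
for each formula `χ ∈ X`, then `w ⊩ φ`. -/
theorem strong_soundness {A : Type} [Nonempty A] {Γ : Set (Fm A)} {φ : Fm A}
    (h : Fm.DerivesFrom Γ φ) (G : Game A) (w : G.W)
    (hΓ : ∀ χ ∈ Γ, G.Sat χ w) : G.Sat φ w :=
  strong_soundness_general h G w hΓ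
end

section
/- For all coalitions C, nonempty finite sets of formulae X and Y, and sacrifice functions s: ⊢ ⟪C:X⟫_s → (⟪C:Y⟫_s → ⟪C:X⊗Y⟫_s). -/
/-!
Both weak dilemmas are disjunctions, so it suffices to derive `⟪C:X⊗Y⟫_s` from
`[C:Z]_s` and `[C:W]_s` for nonempty sublists `Z ⊆ X` and `W ⊆ Y`. Combination gives
`⟪C:Z⊗W⟫_s`, and since `Z⊗W` is a sublist of `X⊗Y`, every disjunct of `⟪C:Z⊗W⟫_s`
is a disjunct of `⟪C:X⊗Y⟫_s`.
-/

namespace Fm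

variable {A : Type}

lemma otimes_sublist_otimes {X Y Z W : List (Fm A)} (hZ : Z.Sublist X) (hW : W.Sublist Y) :
    (otimes Z W).Sublist (otimes X Y) := by
  induction hZ with
  | slnil => simp [otimes]
  | cons a _ ih =>
    simpa [otimes, List.flatMap_cons] using ih.trans (List.sublist_append_right _ _)
  | cons_cons a _ ih =>
    simpa [otimes, List.flatMap_cons] using (hW.map _).append ih

namespace Derives

variable {φ ψ χ θ : Fm A}

lemma imp_trans (h₁ : Derives (imp φ ψ)) (h₂ : Derives (imp ψ χ)) :
    Derives (imp φ χ) := by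
  refine mp h₂ (mp h₁ (taut fun v _ hi => ?_))
  simp only [hi]
  cases v φ <;> cases v ψ <;> cases v χ <;> rfl

lemma imp_comm (h : Derives (imp φ (imp ψ χ))) : Derives (imp ψ (imp φ χ)) := by
  refine mp h (taut fun v _ hi => ?_)
  simp only [hi]
  cases v φ <;> cases v ψ <;> cases v χ <;> rfl

lemma imp_imp_trans (h₁ : Derives (imp φ (imp ψ χ))) (h₂ : Derives (imp χ θ)) :
    Derives (imp φ (imp ψ θ)) := by
  refine mp h₂ (mp h₁ (taut fun v _ hi => ?_))
  simp only [hi]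
  cases v φ <;> cases v ψ <;> cases v χ <;> cases v θ <;> rfl

lemma imp_bigOr_of_mem {L : List (Fm A)} (h : φ ∈ L) : Derives (imp φ (bigOr L)) := by
  induction L with
  | nil => simp at h
  | cons a l ih =>
    rcases List.mem_cons.1 h with rfl | h
    · refine taut fun v hn hi => ?_
      simp only [bigOr, disj, hi, hn]
      cases v φ <;> rfl
    · refine imp_trans (ih h) (taut fun v hn hi => ?_)
      simp only [bigOr, disj, hi, hn]
      cases v a <;> cases v (bigOr l) <;> rfl

lemma bigOr_imp {L : List (Fm A)} (h : ∀ φ ∈ L, Derives (imp φ ψ)) :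
    Derives (imp (bigOr L) ψ) := by
  induction L with
  | nil =>
    refine taut fun v hn hi => ?_
    simp only [bigOr, bot, top, hi, hn]
    cases v (var 0) <;> rfl
  | cons a l ih =>
    have ha := h a List.mem_cons_self
    have hl := ih fun φ hφ => h φ (List.mem_cons_of_mem _ hφ)
    refine mp hl (mp ha (taut fun v hn hi => ?_))
    simp only [bigOr, disj, hi, hn]
    cases v a <;> cases v (bigOr l) <;> cases v ψ <;> rfl

variable {C : Set A} {s : A → ℝ} {X Z : List (Fm A)}

lemma dil_imp_wdil (hZ : Z.Sublist X) (hZne : Z ≠ []) :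
    Derives (imp (dil C Z s) (wdil C X s)) :=
  imp_bigOr_of_mem <| List.mem_map.2
    ⟨Z, List.mem_filter.2 ⟨List.mem_sublists.2 hZ, by simpa using hZne⟩, rfl⟩

lemma wdil_imp (h : ∀ Z, Z.Sublist X → Z ≠ [] → Derives (imp (dil C Z s) ψ)) :
    Derives (imp (wdil C X s) ψ) := by
  refine bigOr_imp fun φ hφ => ?_
  obtain ⟨Z, hZ, rfl⟩ := List.mem_map.1 hφ
  obtain ⟨hZX, hZne⟩ := List.mem_filter.1 hZ
  exact h Z (List.mem_sublists.1 hZX) (by simpa using hZne)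

lemma wdil_imp_wdil (h : Z.Sublist X) : Derives (imp (wdil C Z s) (wdil C X s)) :=
  wdil_imp fun _ hW hWne => dil_imp_wdil (hW.trans h) hWne

lemma dil_imp_dil_imp_wdil_otimes {Y W : List (Fm A)} (hC : C.Nonempty)
    (hZ : Z.Sublist X) (hW : W.Sublist Y) (hZne : Z ≠ []) (hWne : W ≠ []) :
    Derives (imp (dil C Z s) (imp (dil C W s) (wdil C (otimes X Y) s))) :=
  imp_imp_trans (comb hC hZne hWne) (wdil_imp_wdil (otimes_sublist_otimes hZ hW))

end Derives

end Fm

open Fm.Derives in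
theorem wdil_combination_general {A : Type} (C : Set A) (hC : C.Nonempty)
    (X Y : List (Fm A)) (s : A → ℝ) :
    Fm.Derives (Fm.imp (Fm.wdil C X s)
      (Fm.imp (Fm.wdil C Y s) (Fm.wdil C (Fm.otimes X Y) s))) :=
  wdil_imp fun _ hZ hZne => imp_comm <| wdil_imp fun _ hW hWne =>
    imp_comm (dil_imp_dil_imp_wdil_otimes hC hZ hW hZne hWne)

/-- `⊢ ⟪C:X⟫_s → (⟪C:Y⟫_s → ⟪C:X⊗Y⟫_s)`. -/
theorem wdil_combination {A : Type} [Nonempty A] (C : Set A) (hC : C.Nonempty)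
    (X Y : List (Fm A)) (hX : X ≠ []) (hY : Y ≠ []) (s : A → ℝ) :
    Fm.Derives (Fm.imp (Fm.wdil C X s)
      (Fm.imp (Fm.wdil C Y s) (Fm.wdil C (Fm.otimes X Y) s))) :=
  wdil_combination_general C hC X Y s
end

section
/- For each integer n ≥ 1, all formulae φ, ψ₁, …, ψₙ, every coalition C, and every sacrifice function s: ⊢ ⟪C:φ⟫_s → (⟪C:ψ₁,…,ψₙ⟫_s → ⟪C:φ∧ψ₁,…,φ∧ψₙ⟫_s). -/
namespace Fm

variable {A : Type}

lemma val_top (v : Fm A → Bool)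
    (himp : ∀ ψ χ : Fm A, v (imp ψ χ) = (!v ψ || v χ)) :
    v (top : Fm A) = true := by
  simp [top, himp]

lemma val_bot (v : Fm A → Bool)
    (hneg : ∀ ψ : Fm A, v (neg ψ) = !v ψ)
    (himp : ∀ ψ χ : Fm A, v (imp ψ χ) = (!v ψ || v χ)) :
    v (bot : Fm A) = false := by
  simp [bot, hneg, val_top v himp]

lemma val_disj (v : Fm A → Bool)
    (hneg : ∀ ψ : Fm A, v (neg ψ) = !v ψ)
    (himp : ∀ ψ χ : Fm A, v (imp ψ χ) = (!v ψ || v χ)) (a b : Fm A) :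
    v (disj a b) = (v a || v b) := by
  simp [disj, himp, hneg]

lemma val_bigOr (v : Fm A → Bool)
    (hneg : ∀ ψ : Fm A, v (neg ψ) = !v ψ)
    (himp : ∀ ψ χ : Fm A, v (imp ψ χ) = (!v ψ || v χ)) (L : List (Fm A)) :
    v (bigOr L) = L.any v := by
  induction L with
  | nil => simp [bigOr, val_bot v hneg himp]
  | cons x rest ih => simp [bigOr, val_disj v hneg himp, ih]

lemma taut_trans (a b c : Fm A) :
    Tautology (imp (imp a b) (imp (imp b c) (imp a c))) := by
  intro v hneg himp
  simp only [himp]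
  cases va : v a <;> cases vb : v b <;> cases vc : v c <;> simp

lemma taut_swap (a b c : Fm A) :
    Tautology (imp (imp a (imp b c)) (imp b (imp a c))) := by
  intro v hneg himp
  simp only [himp]
  cases va : v a <;> cases vb : v b <;> cases vc : v c <;> simp

lemma taut_comp (a b c e : Fm A) :
    Tautology (imp (imp a (imp b c)) (imp (imp c e) (imp a (imp b e)))) := by
  intro v hneg himp
  simp only [himp]
  cases va : v a <;> cases vb : v b <;> cases vc : v c <;> cases ve : v e <;> simp

lemma taut_orElim (a b c : Fm A) :
    Tautology (imp (imp a c) (imp (imp b c) (imp (disj a b) c))) := by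
  intro v hneg himp
  simp only [himp, disj, hneg]
  cases va : v a <;> cases vb : v b <;> cases vc : v c <;> simp

lemma taut_bigOr_mono {L L' : List (Fm A)} (h : ∀ x ∈ L, x ∈ L') :
    Tautology (imp (bigOr L) (bigOr L')) := by
  intro v hneg himp
  rw [himp, val_bigOr v hneg himp, val_bigOr v hneg himp]
  cases hL : L.any v with
  | false => simp
  | true =>
    obtain ⟨x, hx, hvx⟩ := List.any_eq_true.mp hL
    simp [List.any_eq_true.mpr ⟨x, h x hx, hvx⟩]

lemma derives_imp_trans {a b c : Fm A} (h1 : Derives (imp a b))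
    (h2 : Derives (imp b c)) : Derives (imp a c) :=
  Derives.mp h2 (Derives.mp h1 (Derives.taut (taut_trans a b c)))

lemma derives_swap {a b c : Fm A} (h : Derives (imp a (imp b c))) :
    Derives (imp b (imp a c)) :=
  Derives.mp h (Derives.taut (taut_swap a b c))

lemma derives_comp {a b c e : Fm A} (h1 : Derives (imp a (imp b c)))
    (h2 : Derives (imp c e)) : Derives (imp a (imp b e)) :=
  Derives.mp h2 (Derives.mp h1 (Derives.taut (taut_comp a b c e)))

lemma derives_orElim {θ : Fm A} :
    ∀ {L : List (Fm A)}, (∀ χ ∈ L, Derives (imp χ θ)) → Derives (imp (bigOr L) θ) := by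
  intro L
  induction L with
  | nil =>
    intro _
    apply Derives.taut
    intro v hneg himp
    rw [himp]
    simp [show bigOr ([] : List (Fm A)) = bot from rfl, val_bot v hneg himp]
  | cons x rest ih =>
    intro h
    have hx := h x (by simp)
    have hrest := ih fun χ hχ => h χ (by simp [hχ])
    exact Derives.mp hrest (Derives.mp hx (Derives.taut (taut_orElim x (bigOr rest) θ)))

end Fm

/-- For `n ≥ 1`: `⊢ ⟪C:φ⟫_s → (⟪C:ψ₁,…,ψₙ⟫_s → ⟪C:φ∧ψ₁,…,φ∧ψₙ⟫_s)`. -/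
theorem wdil_asymmetric {A : Type} [Nonempty A] (C : Set A) (hC : C.Nonempty)
    (s : A → ℝ) (n : ℕ) (hn : 1 ≤ n) (φ : Fm A) (ψ : Fin n → Fm A) :
    Fm.Derives (Fm.imp (Fm.wdil C [φ] s)
      (Fm.imp (Fm.wdil C (List.ofFn ψ) s)
        (Fm.wdil C (List.ofFn fun i => Fm.conj φ (ψ i)) s))) := by
  classical
  set X : List (Fm A) := List.ofFn ψ with hX
  set X' : List (Fm A) := List.ofFn (fun i => Fm.conj φ (ψ i)) with hX'
  set d : Fm A := Fm.dil C [φ] s with hd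
  set T : Fm A := Fm.wdil C X' s with hT
  -- Step A: for each nonempty sublist Z of X, ⊢ [C:Z] → (d → T)
  have stepA : ∀ Z : List (Fm A), Z.Sublist X → Z ≠ [] →
      Fm.Derives (Fm.imp (Fm.dil C Z s) (Fm.imp d T)) := by
    intro Z hZsub hZne
    have hcomb := Fm.Derives.comb (C := C) (X := [φ]) (Y := Z) (s := s) hC (by simp) hZne
    have hswap := Fm.derives_swap hcomb
    have hmono : Fm.Tautology (Fm.imp (Fm.wdil C (Fm.otimes [φ] Z) s) T) := by
      rw [hT]
      apply Fm.taut_bigOr_mono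
      intro x hx
      simp only [Fm.wdil, List.mem_map, List.mem_filter, List.mem_sublists] at hx ⊢
      obtain ⟨W, ⟨hWsub, hWne⟩, rfl⟩ := hx
      refine ⟨W, ⟨?_, hWne⟩, rfl⟩
      have hot : Fm.otimes [φ] Z = Z.map (Fm.conj φ) := by
        simp [Fm.otimes]
      rw [hot] at hWsub
      have h2 : (Z.map (Fm.conj φ)).Sublist (X.map (Fm.conj φ)) := hZsub.map _
      have h3 : X.map (Fm.conj φ) = X' := by
        rw [hX, hX', List.map_ofFn]
        rfl
      exact hWsub.trans (h3 ▸ h2)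
    exact Fm.derives_comp hswap (Fm.Derives.taut hmono)
  -- Step B: ⊢ ⟪C:X⟫ → (d → T)
  have stepB : Fm.Derives (Fm.imp (Fm.wdil C X s) (Fm.imp d T)) := by
    rw [Fm.wdil]
    apply Fm.derives_orElim
    intro χ hχ
    simp only [List.mem_map, List.mem_filter, List.mem_sublists] at hχ
    obtain ⟨Z, ⟨hZsub, hZne⟩, rfl⟩ := hχ
    exact stepA Z hZsub (by simpa using hZne)
  have stepB2 := Fm.derives_swap stepB
  -- Step C: ⊢ ⟪C:[φ]⟫ → d
  have stepC : Fm.Derives (Fm.imp (Fm.wdil C [φ] s) d) := by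
    apply Fm.Derives.taut
    intro v hneg himp
    rw [himp]
    have hw : Fm.wdil C [φ] s = Fm.bigOr [d] := by
      simp [Fm.wdil, hd]
    rw [hw, Fm.val_bigOr v hneg himp]
    cases hvd : v d <;> simp [hvd]
  exact Fm.derives_imp_trans stepC stepB2
end

section
/- For each integer n ≥ 0, all formulae φ₁, …, φₙ, every coalition C, and every sacrifice function s: ⊢ ⟪C:φ₁⟫_s ∧ ⋯ ∧ ⟪C:φₙ⟫_s → ⟪C:φ₁∧⋯∧φₙ⟫_s. -/
namespace Fm

variable {A : Type}

open Derives

/-- weakening: ⊢ ψ gives ⊢ φ → ψ. -/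
lemma derives_imp_of_derives {φ ψ : Fm A} (h : Derives ψ) : Derives (imp φ ψ) := by
  refine h.mp (Derives.taut ?_)
  intro v hn hi
  simp only [hi]
  cases v ψ <;> cases v φ <;> simp_all

/-- transitivity of implication. -/
lemma imp_trans {φ ψ χ : Fm A} (h1 : Derives (imp φ ψ)) (h2 : Derives (imp ψ χ)) :
    Derives (imp φ χ) := by
  have t : Derives (imp (imp φ ψ) (imp (imp ψ χ) (imp φ χ))) := by
    refine Derives.taut ?_
    intro v hn hi
    simp only [hi]
    cases v φ <;> cases v ψ <;> cases v χ <;> simp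
  exact h2.mp (h1.mp t)

/-- K-style distribution under a common antecedent. -/
lemma imp_mp {φ ψ χ : Fm A} (h1 : Derives (imp φ (imp ψ χ))) (h2 : Derives (imp φ ψ)) :
    Derives (imp φ χ) := by
  have t : Derives (imp (imp φ (imp ψ χ)) (imp (imp φ ψ) (imp φ χ))) := by
    refine Derives.taut ?_
    intro v hn hi
    simp only [hi]
    cases v φ <;> cases v ψ <;> cases v χ <;> simp
  exact h2.mp (h1.mp t)

lemma conj_left {φ ψ : Fm A} : Derives (imp (conj φ ψ) φ) := by
  refine Derives.taut ?_
  intro v hn hi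
  simp only [conj, hn, hi]
  cases v φ <;> cases v ψ <;> simp

lemma conj_right {φ ψ : Fm A} : Derives (imp (conj φ ψ) ψ) := by
  refine Derives.taut ?_
  intro v hn hi
  simp only [conj, hn, hi]
  cases v φ <;> cases v ψ <;> simp

lemma wdil_singleton (C : Set A) (φ : Fm A) (s : A → ℝ) :
    wdil C [φ] s = disj (dil C [φ] s) bot := rfl

lemma dil_imp_wdil_singleton {C : Set A} {φ : Fm A} {s : A → ℝ} :
    Derives (imp (dil C [φ] s) (wdil C [φ] s)) := by
  rw [wdil_singleton]
  refine Derives.taut ?_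
  intro v hn hi
  simp only [disj, bot, top, hn, hi]
  cases v (dil C [φ] s) <;> cases v (var 0) <;> simp

lemma wdil_singleton_imp_dil {C : Set A} {φ : Fm A} {s : A → ℝ} :
    Derives (imp (wdil C [φ] s) (dil C [φ] s)) := by
  rw [wdil_singleton]
  refine Derives.taut ?_
  intro v hn hi
  simp only [disj, bot, top, hn, hi]
  cases v (dil C [φ] s) <;> cases v (var 0) <;> simp

lemma otimes_singleton (φ ψ : Fm A) : otimes [φ] [ψ] = [conj φ ψ] := rfl

end Fm

/-- For `n ≥ 0`: `⊢ ⟪C:φ₁⟫_s ∧ ⋯ ∧ ⟪C:φₙ⟫_s → ⟪C:φ₁∧⋯∧φₙ⟫_s`. -/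
theorem wdil_wedge {A : Type} [Nonempty A] (C : Set A) (hC : C.Nonempty)
    (s : A → ℝ) (n : ℕ) (φ : Fin n → Fm A) :
    Fm.Derives (Fm.imp (Fm.bigAnd (List.ofFn fun i => Fm.wdil C [φ i] s))
      (Fm.wdil C [Fm.bigAnd (List.ofFn φ)] s)) := by
  induction n with
  | zero =>
      simp only [List.ofFn_zero, Fm.bigAnd]
      refine Fm.derives_imp_of_derives ?_
      have htop : Fm.Derives (Fm.top : Fm A) := Fm.Derives.taut (by
        intro v hn hi
        simp only [Fm.top, hi]
        cases v (Fm.var 0) <;> simp)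
      exact (Fm.Derives.nec hC htop).mp Fm.dil_imp_wdil_singleton
  | succ m ih =>
      rw [List.ofFn_succ, List.ofFn_succ]
      simp only [Fm.bigAnd]
      set W0 := Fm.wdil C [φ 0] s with hW0
      set T := Fm.bigAnd (List.ofFn fun i => Fm.wdil C [φ i.succ] s) with hT
      set Ψ := Fm.bigAnd (List.ofFn fun i => φ i.succ) with hΨ
      -- conj W0 T → dil C [φ 0] s
      have h1 : Fm.Derives (Fm.imp (Fm.conj W0 T) (Fm.dil C [φ 0] s)) :=
        Fm.imp_trans Fm.conj_left Fm.wdil_singleton_imp_dil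
      -- conj W0 T → dil C [Ψ] s
      have h2 : Fm.Derives (Fm.imp (Fm.conj W0 T) (Fm.dil C [Ψ] s)) :=
        Fm.imp_trans (Fm.imp_trans Fm.conj_right (ih fun i => φ i.succ))
          Fm.wdil_singleton_imp_dil
      have hcomb : Fm.Derives (Fm.imp (Fm.dil C [φ 0] s)
          (Fm.imp (Fm.dil C [Ψ] s) (Fm.wdil C (Fm.otimes [φ 0] [Ψ]) s))) :=
        Fm.Derives.comb hC (by simp) (by simp)
      rw [Fm.otimes_singleton] at hcomb
      exact Fm.imp_mp (Fm.imp_trans h1 hcomb) h2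
end

section
/- In the canonical game, for any state w ∈ W, any formula ⟪C:X⟫_s ∈ w, and any strategy t ∈ Δ^C of coalition C, there is a formula φ ∈ X such that for each action profile δ ∈ Δ^𝒜 and each state u ∈ W, if |δ|_w ≤ s, t =_C δ, and (w,δ,u) ∈ M, then φ ∈ u. -/
/-- In the canonical game: for any state `w`, any formula `⟪C:X⟫_s ∈ w`, and any
strategy `t ∈ Δ^C` of coalition `C`, there is a formula `φ ∈ X` such that for
each action profile `δ ∈ Δ^𝒜` and each state `u`, if `|δ|_w ≤ s`, `t =_C δ`, and
`(w,δ,u) ∈ M`, then `φ ∈ u`. -/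
theorem canonical_left_arrow {A : Type} [Nonempty A] (C : Set A) (hC : C.Nonempty)
    (X : List (Fm A)) (hX : X ≠ []) (s : A → ℝ)
    (w : {Γ : Set (Fm A) // Fm.MCS Γ}) (hw : Fm.wdil C X s ∈ w.1)
    (t : ↥C → Set (Fm A) × ℝ) :
    ∃ φ ∈ X, ∀ (δ : A → Set (Fm A) × ℝ) (u : {Γ : Set (Fm A) // Fm.MCS Γ}),
      (∀ a : A, (canonicalGame A).cost (δ a) a w ≤ s a) →
      (∀ a : ↥C, t a = δ a.1) →
      (canonicalGame A).M w δ u → φ ∈ u.1 := by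
  by_cases h : ∃ a : ↥C, ∃ φ ∈ X, φ ∈ (t a).1
  · obtain ⟨a, φ, hφX, hφt⟩ := h
    refine ⟨φ, hφX, fun δ u hcost hagree hM => ?_⟩
    have h1 := hM.1 a.1
    rw [hagree a] at hφt
    exact h1 hφt
  · refine ⟨X.head (by simpa using hX), List.head_mem _, fun δ u hcost hagree hM => ?_⟩
    exfalso
    obtain ⟨a, haC, φ, hφδ, hφX⟩ := hM.2 C X s hC hX hw (fun a => hcost a)
    exact h ⟨⟨a, haC⟩, φ, hφX, by rw [hagree ⟨a, haC⟩]; exact hφδ⟩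
end
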